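/- Let F be a plane forest with N ≥ 2 leaves and separation array (a_1,…,a_{N−1}). For all indices 1 ≤ i < j ≤ N, the separation level of leaves i and j — defined to be 1 if they lie in different trees, and 1 + (the level of their lowest common ancestor) otherwise — equals min_{i ≤ k < j} a_k. In particular, the separation array determines the separation level of every pair of leaves of the forest. -/
import Mathlib


/-- A rooted plane tree: a node carrying a finite ordered list of child subtrees.
A node with no children is a leaf. -/
inductive PTree : Type where
  | node : List PTree → PTree

namespace PTree

mutual
/-- Number of leaves of a plane tree. -/
def leaves : PTree → ℕ
  | .node [] => 1
  | .node (c :: cs) => c.leaves + leavesList cs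

/-- Total number of leaves of a list of plane trees. -/
def leavesList : List PTree → ℕ
  | [] => 0
  | c :: cs => c.leaves + leavesList cs
end

mutual
/-- Height of a plane tree (a single leaf has height 1). -/
def height : PTree → ℕ
  | .node [] => 1
  | .node (c :: cs) => 1 + max c.height (heightList cs)

/-- Maximum height among a list of plane trees (0 for the empty list). -/
def heightList : List PTree → ℕ
  | [] => 0
  | c :: cs => max c.height (heightList cs)
end

mutual
/-- Separation levels between consecutive leaves inside a tree whose root is at level `l`:
between two consecutive leaves lying in distinct children we record `l+1`
(one more than the level of their lowest common ancestor, which is the root). -/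
def enc : PTree → ℕ → List ℕ
  | .node [], _ => []
  | .node (c :: cs), l => c.enc (l + 1) ++ encList cs (l + 1)

/-- Separation levels for a list of sibling subtrees all at level `l`, including
the separator `l` between consecutive subtrees. -/
def encList : List PTree → ℕ → List ℕ
  | [], _ => []
  | c :: cs, l => (l :: c.enc l) ++ encList cs l
end

end PTree

/-- Total number of leaves of a plane forest. -/
def forestLeaves (F : List PTree) : ℕ := PTree.leavesList F

/-- Height of a plane forest: the maximum level of any of its nodes (roots are at level 1). -/
def forestHeight (F : List PTree) : ℕ := PTree.heightList F

/-- The separation array of a plane forest: for each pair of consecutive leaves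
(numbered left to right), the level at which they separate (`1` if they lie in
different trees, and `1 +` the level of their lowest common ancestor otherwise). -/
def forestSep : List PTree → List ℕ
  | [] => []
  | t :: ts => t.enc 1 ++ PTree.encList ts 1

mutual
/-- Separation level of the `i`-th and `j`-th leaves (0-based, `i < j`) of a tree whose
root is at level `l`: `1 +` the level of their lowest common ancestor. -/
def PTree.pairSepT : PTree → ℕ → ℕ → ℕ → ℕ
  | .node cs, l, i, j => pairSepL cs (l + 1) i j

/-- Separation level of the `i`-th and `j`-th leaves (0-based, `i < j`) within a list of
sibling subtrees all at level `l`: if they lie in distinct subtrees the answer is `l`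
(their lowest common ancestor is the common parent, at level `l - 1`). -/
def pairSepL : List PTree → ℕ → ℕ → ℕ → ℕ
  | [], _, _, _ => 0
  | t :: ts, l, i, j =>
    if j < t.leaves then PTree.pairSepT t l i j
    else if i < t.leaves then l
    else pairSepL ts l (i - t.leaves) (j - t.leaves)
end

/-- Separation level of the `i`-th and `j`-th leaves (0-based, `i < j`) of a plane
forest: `1` if they lie in different trees, and `1 +` the level of their lowest
common ancestor otherwise. -/
def forestPairSep (F : List PTree) (i j : ℕ) : ℕ := pairSepL F 1 i j

namespace SepAux

open PTree

theorem one_le_leaves : ∀ t : PTree, 1 ≤ t.leaves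
  | .node [] => le_refl 1
  | .node (c :: cs) => by
      rw [leaves]
      exact le_trans (one_le_leaves c) (Nat.le_add_right _ _)

mutual
theorem enc_length : ∀ (t : PTree) (l : ℕ), (t.enc l).length = t.leaves - 1
  | .node [], _ => rfl
  | .node (c :: cs), l => by
      rw [enc, leaves, List.length_append, enc_length c, encList_length cs]
      have := one_le_leaves c
      omega
theorem encList_length : ∀ (ts : List PTree) (l : ℕ),
    (encList ts l).length = leavesList ts
  | [], _ => rfl
  | c :: cs, l => by
      rw [encList, leavesList, List.length_append, List.length_cons, enc_length c,
        encList_length cs]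
      have := one_le_leaves c
      omega
end

mutual
theorem enc_ge : ∀ (t : PTree) (l : ℕ), ∀ x ∈ t.enc l, l + 1 ≤ x
  | .node [], _ => by intro x hx; rw [enc] at hx; simp at hx
  | .node (c :: cs), l => by
      intro x hx
      rw [enc] at hx
      rcases List.mem_append.1 hx with h | h
      · exact le_trans (Nat.le_succ _) (enc_ge c (l + 1) x h)
      · exact encList_ge cs (l + 1) x h
theorem encList_ge : ∀ (ts : List PTree) (l : ℕ), ∀ x ∈ encList ts l, l ≤ x
  | [], _ => by intro x hx; rw [encList] at hx; simp at hx
  | c :: cs, l => by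
      intro x hx
      rw [encList] at hx
      rcases List.mem_append.1 hx with h | h
      · rcases List.mem_cons.1 h with rfl | h
        · exact le_refl _
        · exact le_trans (Nat.le_succ _) (enc_ge c l x h)
      · exact encList_ge cs l x h
end

mutual
theorem sepT_le : ∀ (t : PTree) (l i j k : ℕ), i < j → j < t.leaves → i ≤ k → k < j →
    t.pairSepT l i j ≤ (t.enc l).getD k 0
  | .node [], l, i, j, k => by
      intro hij hj _ _
      rw [leaves] at hj; omega
  | .node (c :: cs), l, i, j, k => by
      intro hij hj hik hkj
      rw [PTree.pairSepT, enc]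
      have hj' : j < leavesList (c :: cs) := by
        rw [leaves] at hj; rw [leavesList]; omega
      have := sepL_le (c :: cs) (l + 1) i j (k + 1) hij hj' (by omega) (by omega)
      rw [encList, List.cons_append, List.getD_cons_succ] at this
      exact this
theorem sepL_le : ∀ (ts : List PTree) (l i j k : ℕ), i < j → j < leavesList ts →
    i < k → k ≤ j → pairSepL ts l i j ≤ (encList ts l).getD k 0
  | [], l, i, j, k => by
      intro hij hj _ _
      rw [leavesList] at hj; omega
  | t :: ts, l, i, j, k => by
      intro hij hj hik hkj
      have hlt := one_le_leaves t
      rw [pairSepL]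
      by_cases hjt : j < t.leaves
      · rw [if_pos hjt, encList]
        have hklen : k < (l :: t.enc l).length := by
          rw [List.length_cons, enc_length]; omega
        rw [List.getD_append _ _ _ _ hklen]
        obtain ⟨k', rfl⟩ : ∃ k', k = k' + 1 := ⟨k - 1, by omega⟩
        rw [List.getD_cons_succ]
        exact sepT_le t l i j k' hij hjt (by omega) (by omega)
      · rw [if_neg hjt]
        by_cases hit : i < t.leaves
        · rw [if_pos hit]
          have hlen : k < (encList (t :: ts) l).length := by
            rw [encList_length]; omega
          have hmem : (encList (t :: ts) l).getD k 0 ∈ encList (t :: ts) l := by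
            rw [List.getD_eq_getElem _ _ hlen]
            exact List.getElem_mem hlen
          exact encList_ge (t :: ts) l _ hmem
        · rw [if_neg hit]
          rw [encList, List.getD_append_right _ _ _ _
            (by rw [List.length_cons, enc_length]; omega)]
          have hlen : (l :: t.enc l).length = t.leaves := by
            rw [List.length_cons, enc_length]; omega
          rw [hlen]
          rw [leavesList] at hj
          exact sepL_le ts l (i - t.leaves) (j - t.leaves) (k - t.leaves)
            (by omega) (by omega) (by omega) (by omega)
end

mutual
theorem sepT_ex : ∀ (t : PTree) (l i j : ℕ), i < j → j < t.leaves →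
    ∃ k, i ≤ k ∧ k < j ∧ (t.enc l).getD k 0 = t.pairSepT l i j
  | .node [], l, i, j => by
      intro hij hj
      rw [leaves] at hj; omega
  | .node (c :: cs), l, i, j => by
      intro hij hj
      have hj' : j < leavesList (c :: cs) := by
        rw [leaves] at hj; rw [leavesList]; omega
      obtain ⟨k, hk1, hk2, hk3⟩ := sepL_ex (c :: cs) (l + 1) i j hij hj'
      refine ⟨k - 1, by omega, by omega, ?_⟩
      rw [PTree.pairSepT, enc, ← hk3, encList, List.cons_append]
      obtain ⟨k', rfl⟩ : ∃ k', k = k' + 1 := ⟨k - 1, by omega⟩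
      rw [List.getD_cons_succ]
      simp
theorem sepL_ex : ∀ (ts : List PTree) (l i j : ℕ), i < j → j < leavesList ts →
    ∃ k, i < k ∧ k ≤ j ∧ (encList ts l).getD k 0 = pairSepL ts l i j
  | [], l, i, j => by
      intro hij hj
      rw [leavesList] at hj; omega
  | t :: ts, l, i, j => by
      intro hij hj
      have hlt := one_le_leaves t
      have hlen : (l :: t.enc l).length = t.leaves := by
        rw [List.length_cons, enc_length]; omega
      by_cases hjt : j < t.leaves
      · obtain ⟨k, hk1, hk2, hk3⟩ := sepT_ex t l i j hij hjt
        refine ⟨k + 1, by omega, by omega, ?_⟩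
        rw [pairSepL, if_pos hjt, encList,
          List.getD_append _ _ _ _ (by rw [hlen]; omega), List.getD_cons_succ]
        exact hk3
      · by_cases hit : i < t.leaves
        · refine ⟨t.leaves, hit, by omega, ?_⟩
          rw [pairSepL, if_neg hjt, if_pos hit, encList,
            List.getD_append_right _ _ _ _ (by omega), hlen, Nat.sub_self]
          rw [leavesList] at hj
          match ts with
          | [] => rw [leavesList] at hj; omega
          | u :: us => rw [encList, List.cons_append, List.getD_cons_zero]
        · rw [leavesList] at hj
          obtain ⟨k, hk1, hk2, hk3⟩ := sepL_ex ts l (i - t.leaves) (j - t.leaves)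
            (by omega) (by omega)
          refine ⟨k + t.leaves, by omega, by omega, ?_⟩
          rw [pairSepL, if_neg hjt, if_neg hit, encList,
            List.getD_append_right _ _ _ _ (by omega), hlen, Nat.add_sub_cancel]
          exact hk3
end

end SepAux

/-- Let `F` be a plane forest with `N ≥ 2` leaves and separation array
`(a_1, …, a_{N-1})`. For all indices `1 ≤ i < j ≤ N` (1-based leaf numbers), the
separation level of leaves `i` and `j` equals `min_{i ≤ k < j} a_k`; in particular the
separation array determines the separation level of every pair of leaves. -/
theorem pairSep_eq_min_sepArray (F : List PTree) (hF : F ≠ []) (N : ℕ) (hN : 2 ≤ N)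
    (hleaves : forestLeaves F = N)
    (i j : ℕ) (hi : 1 ≤ i) (hij : i < j) (hj : j ≤ N) :
    forestPairSep F (i - 1) (j - 1) =
      (Finset.Ico i j).inf' (Finset.nonempty_Ico.mpr hij)
        (fun k => (forestSep F).getD (k - 1) 0) := by
  obtain ⟨t, ts, rfl⟩ := List.exists_cons_of_ne_nil hF
  have hrel : ∀ k, 1 ≤ k →
      (forestSep (t :: ts)).getD (k - 1) 0 = (PTree.encList (t :: ts) 1).getD k 0 := by
    intro k hk
    obtain ⟨k', rfl⟩ : ∃ k', k = k' + 1 := ⟨k - 1, by omega⟩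
    rw [forestSep, PTree.encList, List.cons_append, List.getD_cons_succ,
      Nat.add_sub_cancel]
  have hjN : j - 1 < PTree.leavesList (t :: ts) := by
    rw [forestLeaves] at hleaves; omega
  have hij' : i - 1 < j - 1 := by omega
  apply le_antisymm
  · apply Finset.le_inf'
    intro k hk
    rw [Finset.mem_Ico] at hk
    rw [hrel k (by omega), forestPairSep]
    exact SepAux.sepL_le (t :: ts) 1 (i - 1) (j - 1) k hij' hjN (by omega) (by omega)
  · obtain ⟨k, hk1, hk2, hk3⟩ := SepAux.sepL_ex (t :: ts) 1 (i - 1) (j - 1) hij' hjN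
    rw [forestPairSep, ← hk3, ← hrel k (by omega)]
    exact Finset.inf'_le _ (Finset.mem_Ico.mpr ⟨by omega, by omega⟩)
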